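/- arXiv:0901.3205 — 2 statements merged into one kernel-verified Lean document; each statement's English description precedes it below -/
import Mathlib

section
/- Let B = ℂ[u]⋊Γ. Then the ℂ-linear span of the commutators {xy − yx : x, y ∈ B} equals the ℂ-linear span of the set {u^j ξ^i : j ≥ 1, 1 ≤ i ≤ d−1} ∪ {u^j : j ≥ 1, d ∤ j}. -/
/-!
By bilinearity the commutator space of `B` is spanned by the commutators of basis elements, and
`[u^{j₁} ξ^{i₁}, u^{j₂} ξ^{i₂}] = (ζ^{i₁ j₂} - ζ^{i₂ j₁}) u^{j₁+j₂} ξ^{i₁+i₂}`.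
The coefficient vanishes iff `i₁ j₂ ≡ i₂ j₁ (mod d)`, which holds when `j₁ = j₂ = 0` and when
`i₁ + i₂ ≡ 0`, `j₁ + j₂ ≡ 0`; otherwise the commutator is a multiple of a generator.
Conversely `[u^{j-1} ξ^i, u] = (ζ^i - 1) u^j ξ^i` and `[ξ, u^j ξ^{-1}] = (ζ^j - 1) u^j`, with
nonzero coefficients for `i ≠ 0`, resp. `d ∤ j`.
-/

/-- Data exhibiting `A` as the skew group algebra `ℂ[u^{±1}] ⋊ (ℤ/dℤ)`,
where `b j i` represents the basis element `u^j ξ^i`. -/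
structure SkewLaurentAlgebra (d : ℕ) (ζ : ℂ) (A : Type) [Ring A] [Algebra ℂ A] where
  b : ℤ → ZMod d → A
  basis : Module.Basis (ℤ × ZMod d) ℂ A
  basis_eq : ∀ (j : ℤ) (i : ZMod d), basis (j, i) = b j i
  b_one : b 0 0 = 1
  b_mul : ∀ (j₁ j₂ : ℤ) (i₁ i₂ : ZMod d),
    b j₁ i₁ * b j₂ i₂ = (ζ ^ ((i₁.val : ℤ) * j₂)) • b (j₁ + j₂) (i₁ + i₂)

theorem IsPrimitiveRoot.zpow_eq_zpow_iff {G₀ : Type*} [CommGroupWithZero G₀] {k : ℕ} [NeZero k]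
    {ζ : G₀} (hζ : IsPrimitiveRoot ζ k) {a b : ℤ} : ζ ^ a = ζ ^ b ↔ (a : ZMod k) = b := by
  have hζ₀ : ζ ≠ 0 := hζ.ne_zero (NeZero.ne k)
  rw [ZMod.intCast_eq_intCast_iff_dvd_sub, ← hζ.zpow_eq_one_iff_dvd, zpow_sub₀ hζ₀,
    div_eq_one_iff_eq (zpow_ne_zero _ hζ₀), eq_comm]

theorem Submodule.span_commutators_span {R A : Type*} [CommRing R] [Ring A] [Algebra R A]
    (s : Set A) :
    span R {x : A | ∃ y ∈ span R s, ∃ z ∈ span R s, x = y * z - z * y}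
      = span R {x : A | ∃ y ∈ s, ∃ z ∈ s, x = y * z - z * y} := by
  let f := LinearMap.mul R A - (LinearMap.mul R A).flip
  calc _ = map₂ f (span R s) (span R s) := by
        rw [map₂_eq_span_image2]; congr; ext; simp [f, eq_comm]
    _ = _ := by
        rw [map₂_span_span]; congr; ext; simp [f, eq_comm]

namespace SkewLaurentAlgebra

variable {d : ℕ} {ζ : ℂ} {A : Type} [Ring A] [Algebra ℂ A] (S : SkewLaurentAlgebra d ζ A)

theorem b_mul_b_sub_b_mul_b (j₁ j₂ : ℤ) (i₁ i₂ : ZMod d) :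
    S.b j₁ i₁ * S.b j₂ i₂ - S.b j₂ i₂ * S.b j₁ i₁
      = (ζ ^ ((i₁.val : ℤ) * j₂) - ζ ^ ((i₂.val : ℤ) * j₁)) • S.b (j₁ + j₂) (i₁ + i₂) := by
  rw [S.b_mul, S.b_mul, add_comm j₂, add_comm i₂, sub_smul]

def commutatorGenerators : Set A :=
  {x : A | ∃ (j : ℤ) (i : ZMod d), 1 ≤ j ∧ i ≠ 0 ∧ x = S.b j i}
    ∪ {x : A | ∃ j : ℤ, 1 ≤ j ∧ ¬ ((d : ℤ) ∣ j) ∧ x = S.b j 0}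

def polyCommutators : Set A :=
  {x : A | ∃ y ∈ {x : A | ∃ (j : ℤ) (i : ZMod d), 0 ≤ j ∧ x = S.b j i},
    ∃ z ∈ {x : A | ∃ (j : ℤ) (i : ZMod d), 0 ≤ j ∧ x = S.b j i}, x = y * z - z * y}

variable [NeZero d]

theorem b_mul_b_sub_b_mul_b_mem_span_commutatorGenerators (hζ : IsPrimitiveRoot ζ d)
    {j₁ j₂ : ℤ} (i₁ i₂ : ZMod d) (hj₁ : 0 ≤ j₁) (hj₂ : 0 ≤ j₂) :
    S.b j₁ i₁ * S.b j₂ i₂ - S.b j₂ i₂ * S.b j₁ i₁ ∈ Submodule.span ℂ S.commutatorGenerators := by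
  rw [S.b_mul_b_sub_b_mul_b]
  by_cases hc : ζ ^ ((i₁.val : ℤ) * j₂) = ζ ^ ((i₂.val : ℤ) * j₁)
  · rw [hc, sub_self, zero_smul]
    exact zero_mem _
  refine Submodule.smul_mem _ _ (Submodule.subset_span ?_)
  rw [hζ.zpow_eq_zpow_iff] at hc
  push_cast [ZMod.natCast_val, ZMod.cast_id] at hc
  have hj : 1 ≤ j₁ + j₂ := by
    by_contra! h
    obtain ⟨rfl, rfl⟩ : j₁ = 0 ∧ j₂ = 0 := by omega
    simp at hc
  by_cases hi : i₁ + i₂ = 0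
  · refine Or.inr ⟨j₁ + j₂, hj, fun hdvd => hc ?_, by rw [hi]⟩
    rw [← ZMod.intCast_zmod_eq_zero_iff_dvd] at hdvd
    push_cast at hdvd
    linear_combination i₁ * hdvd - (j₁ : ZMod d) * hi
  · exact Or.inl ⟨j₁ + j₂, i₁ + i₂, hj, hi, rfl⟩

theorem b_mem_span_polyCommutators_of_ne_zero (hζ : IsPrimitiveRoot ζ d) {j : ℤ} {i : ZMod d}
    (hj : 1 ≤ j) (hi : i ≠ 0) : S.b j i ∈ Submodule.span ℂ S.polyCommutators := by
  have hc : ζ ^ ((i.val : ℤ) * 1) - ζ ^ (((0 : ZMod d).val : ℤ) * (j - 1)) ≠ 0 := by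
    rw [Ne, sub_eq_zero, hζ.zpow_eq_zpow_iff]
    push_cast [ZMod.natCast_val, ZMod.cast_id]
    simpa using hi
  have h := S.b_mul_b_sub_b_mul_b (j - 1) 1 i 0
  rw [sub_add_cancel, add_zero] at h
  refine (Submodule.smul_mem_iff _ hc).mp (h ▸ Submodule.subset_span ?_)
  exact ⟨_, ⟨j - 1, i, by omega, rfl⟩, _, ⟨1, 0, zero_le_one, rfl⟩, rfl⟩

theorem b_zero_mem_span_polyCommutators (hζ : IsPrimitiveRoot ζ d) {j : ℤ} (hj : 1 ≤ j)
    (hdj : ¬ (d : ℤ) ∣ j) : S.b j 0 ∈ Submodule.span ℂ S.polyCommutators := by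
  have hc : ζ ^ (((1 : ZMod d).val : ℤ) * j) - ζ ^ (((-1 : ZMod d).val : ℤ) * 0) ≠ 0 := by
    rw [Ne, sub_eq_zero, hζ.zpow_eq_zpow_iff]
    push_cast [ZMod.natCast_val, ZMod.cast_id]
    rwa [one_mul, mul_zero, ZMod.intCast_zmod_eq_zero_iff_dvd]
  have h := S.b_mul_b_sub_b_mul_b 0 j 1 (-1)
  rw [zero_add, add_neg_cancel] at h
  refine (Submodule.smul_mem_iff _ hc).mp (h ▸ Submodule.subset_span ?_)
  exact ⟨_, ⟨0, 1, le_rfl, rfl⟩, _, ⟨j, -1, by omega, rfl⟩, rfl⟩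

end SkewLaurentAlgebra

theorem stmt_5 (d : ℕ) (hd : 0 < d) (ζ : ℂ) (hζ : IsPrimitiveRoot ζ d)
    (A : Type) [Ring A] [Algebra ℂ A] (S : SkewLaurentAlgebra d ζ A)
    (B : Submodule ℂ A)
    (hB : B = Submodule.span ℂ {x : A | ∃ (j : ℤ) (i : ZMod d), 0 ≤ j ∧ x = S.b j i}) :
    Submodule.span ℂ {x : A | ∃ y ∈ B, ∃ z ∈ B, x = y * z - z * y}
      = Submodule.span ℂ
          ({x : A | ∃ (j : ℤ) (i : ZMod d), 1 ≤ j ∧ i ≠ 0 ∧ x = S.b j i}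
            ∪ {x : A | ∃ j : ℤ, 1 ≤ j ∧ ¬ ((d : ℤ) ∣ j) ∧ x = S.b j 0}) := by
  have : NeZero d := ⟨hd.ne'⟩
  subst hB
  change _ = Submodule.span ℂ S.commutatorGenerators
  rw [Submodule.span_commutators_span]
  change Submodule.span ℂ S.polyCommutators = _
  apply le_antisymm <;> rw [Submodule.span_le]
  · rintro _ ⟨_, ⟨j₁, i₁, hj₁, rfl⟩, _, ⟨j₂, i₂, hj₂, rfl⟩, rfl⟩
    exact S.b_mul_b_sub_b_mul_b_mem_span_commutatorGenerators hζ i₁ i₂ hj₁ hj₂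
  · rintro _ (⟨j, i, hj, hi, rfl⟩ | ⟨j, hj, hdj, rfl⟩)
    · exact S.b_mem_span_polyCommutators_of_ne_zero hζ hj hi
    · exact S.b_zero_mem_span_polyCommutators hζ hj hdj
end

section
/- The skew group algebra ℂ[u^{±1},v^{±1}]⋊Γ is isomorphic, as a ℂ-algebra, to the algebra M_d(ℂ[s^{±1},t^{±1}]) of d×d matrices over the Laurent polynomial ring in two variables ℂ[s^{±1},t^{±1}]. -/
/-!
Put `x = u` and `s = uv`. Then `ℂ[u^{±1}, v^{±1}] = ℂ[x^{±1}] ⊗ ℂ[s^{±1}]` and `ξ` fixes `s`, so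
only the first factor sees the group. With `t = x^d`, `ℂ[x^{±1}]` is free over `ℂ[t^{±1}]` on
`1, x, …, x^{d-1}`; letting `x` act by multiplication and `ξ` by `x^r ↦ ζ^r x^r` sends
`u^a v^b ξ^c = s^b x^{a-b} ξ^c` to `s^b X^{a-b} D^c`, where `X` is a shift matrix, `D` is diagonal,
and `D X = ζ X D`. This is multiplicative, and it is bijective because discrete Fourier inversion
over `ℤ/dℤ` recovers the diagonal matrix units `E_jj` from the `D^c`, after which the products
`s^m X^k E_jj` run exactly through the basis `s^m t^n E_ij` of the matrix algebra.
-/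

/-- Data exhibiting `A` as the skew group algebra `ℂ[u^{±1}, v^{±1}] ⋊ (ℤ/dℤ)`,
where `b a b' c` represents the basis element `u^a v^{b'} ξ^c`. -/
structure SkewLaurent2Algebra (d : ℕ) (ζ : ℂ) (A : Type) [Ring A] [Algebra ℂ A] where
  b : ℤ → ℤ → ZMod d → A
  basis : Module.Basis (ℤ × ℤ × ZMod d) ℂ A
  basis_eq : ∀ (a b' : ℤ) (c : ZMod d), basis (a, b', c) = b a b' c
  b_one : b 0 0 0 = 1
  b_mul : ∀ (a b' : ℤ) (c : ZMod d) (e f : ℤ) (g : ZMod d),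
    b a b' c * b e f g = (ζ ^ ((c.val : ℤ) * (e - f))) • b (a + e) (b' + f) (c + g)

theorem LinearMap.map_mul_of_map_mul_basis {ι R A B : Type*} [CommSemiring R] [Semiring A]
    [Semiring B] [Algebra R A] [Algebra R B] (b : Module.Basis ι R A) (f : A →ₗ[R] B)
    (h : ∀ i j, f (b i * b j) = f (b i) * f (b j)) (x y : A) : f (x * y) = f x * f y := by
  revert x y
  rw [LinearMap.map_mul_iff]
  exact LinearMap.ext_basis b b h

theorem AddChar.apply_mul_intCast {d : ℕ} [NeZero d] {M : Type*} [DivisionMonoid M]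
    (χ : AddChar (ZMod d) M) (c : ZMod d) (k : ℤ) : χ (c * k) = χ 1 ^ ((c.val : ℤ) * k) := by
  rw [← AddChar.map_zsmul_eq_zpow, zsmul_one]
  push_cast
  rw [ZMod.natCast_zmod_val]

theorem AddChar.sum_apply_neg_mul_mul_apply_mul {R R' : Type*} [CommRing R] [Fintype R]
    [DecidableEq R] [CommRing R'] [IsDomain R'] {ψ : AddChar R R'} (hψ : ψ.IsPrimitive) (j k : R) :
    ∑ c, ψ (-(c * j)) * ψ (c * k) = if k = j then (Fintype.card R : R') else 0 := by
  have hshift : ∀ c, ψ (-(c * j)) * ψ (c * k) = ψ (c * (k - j)) := fun c => by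
    rw [← AddChar.map_add_eq_mul]
    ring_nf
  simp_rw [hshift, AddChar.sum_mulShift _ hψ, sub_eq_zero, Nat.cast_ite, Nat.cast_zero]

namespace ZMod

variable {d : ℕ} [NeZero d]

theorem val_add_intCast (r : ZMod d) (n : ℤ) :
    ((r + n : ZMod d).val : ℤ) = ((r.val : ℤ) + n) % d := by
  rw [← ZMod.val_intCast]
  push_cast
  rw [ZMod.natCast_zmod_val]

theorem val_add_intCast_ediv (r : ZMod d) (m n : ℤ) :
    (((r + n : ZMod d).val : ℤ) + m) / d + ((r.val : ℤ) + n) / d = (r.val + (m + n)) / d := by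
  have hd : (d : ℤ) ≠ 0 := by exact_mod_cast NeZero.ne d
  rw [val_add_intCast, ← Int.add_mul_ediv_left _ _ hd]
  congr 1
  have := Int.mul_ediv_add_emod ((r.val : ℤ) + n) d
  linarith

end ZMod

open LaurentPolynomial

local notation "R₂" => LaurentPolynomial (LaurentPolynomial ℂ)

noncomputable def laurentBasis₂ : Module.Basis (ℤ × ℤ) ℂ R₂ :=
  (AddMonoidAlgebra.basis ℤ ℂ).smulTower (AddMonoidAlgebra.basis ℤ (LaurentPolynomial ℂ))

theorem laurentBasis₂_apply (m n : ℤ) : laurentBasis₂ (m, n) = C (T m) * T n := by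
  rw [laurentBasis₂, Module.Basis.smulTower_apply, smul_eq_C_mul]
  rfl

/-- Multiplication by `x^n` on `ℂ[x^{±1}] = ⨁_{r < d} x^r ℂ[t^{±1}]`, `t = x^d`:
`x^n · x^r = x^{(r + n) mod d} t^{⌊(r + n) / d⌋}`. -/
noncomputable def shiftMatrix (d : ℕ) (n : ℤ) : Matrix (ZMod d) (ZMod d) R₂ :=
  Matrix.of fun i j => if i = j + n then T (((j.val : ℤ) + n) / d) else 0

section ShiftMatrix

variable {d : ℕ} [NeZero d]

theorem shiftMatrix_zero : shiftMatrix d 0 = 1 := by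
  refine Matrix.ext fun i j => ?_
  have hj : (j.val : ℤ) / d = 0 := Int.ediv_eq_zero_of_lt (by positivity)
    (by exact_mod_cast ZMod.val_lt j)
  simp only [shiftMatrix, Matrix.of_apply, Matrix.one_apply, Int.cast_zero, add_zero, hj, T_zero]

theorem shiftMatrix_mul (m n : ℤ) : shiftMatrix d m * shiftMatrix d n = shiftMatrix d (m + n) := by
  refine Matrix.ext fun i j => ?_
  simp only [shiftMatrix, Matrix.mul_apply, Matrix.of_apply, ite_mul, mul_ite, zero_mul, mul_zero,
    Finset.sum_ite_eq', Finset.mem_univ, if_true]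
  rw [← T_add, ZMod.val_add_intCast_ediv, Int.cast_add, add_assoc, add_comm (n : ZMod d)]

theorem shiftMatrix_mul_single (n : ℤ) (j : ZMod d) :
    shiftMatrix d n * Matrix.single j j 1
      = Matrix.single (j + n) j (T (((j.val : ℤ) + n) / d)) := by
  refine Matrix.ext fun k l => ?_
  simp only [shiftMatrix, Matrix.mul_apply, Matrix.single_apply, Matrix.of_apply, mul_ite, mul_one,
    mul_zero, ite_and, Finset.sum_ite_eq, Finset.mem_univ, if_true]
  by_cases hl : j = l
  · subst hl
    simp only [if_true, eq_comm]
  · simp only [hl, if_false, ite_self]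

end ShiftMatrix

section TwistMatrix

variable {d : ℕ} (χ : AddChar (ZMod d) ℂ)

noncomputable def twistMatrix (c : ZMod d) : Matrix (ZMod d) (ZMod d) R₂ :=
  Matrix.diagonal fun r => algebraMap ℂ R₂ (χ (c * r))

theorem twistMatrix_zero : twistMatrix χ 0 = 1 := by
  simp [twistMatrix]

variable [NeZero d]

theorem twistMatrix_mul (c g : ZMod d) :
    twistMatrix χ c * twistMatrix χ g = twistMatrix χ (c + g) := by
  simp only [twistMatrix, Matrix.diagonal_mul_diagonal, ← map_mul, ← AddChar.map_add_eq_mul,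
    add_mul]

theorem twistMatrix_mul_shiftMatrix (c : ZMod d) (n : ℤ) :
    twistMatrix χ c * shiftMatrix d n = χ (c * n) • (shiftMatrix d n * twistMatrix χ c) := by
  refine Matrix.ext fun i j => ?_
  simp only [twistMatrix, shiftMatrix, Matrix.diagonal_mul, Matrix.mul_diagonal, Matrix.smul_apply,
    Matrix.of_apply]
  split_ifs with h
  · rw [h, mul_add, AddChar.map_add_eq_mul, map_mul, Algebra.smul_def]
    ring
  · simp

theorem sum_twistMatrix (hχ : χ.IsPrimitive) (j : ZMod d) :
    ∑ c, χ (-(c * j)) • twistMatrix χ c = (d : ℂ) • Matrix.single j j 1 := by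
  refine Matrix.ext fun k l => ?_
  simp only [Matrix.sum_apply, Matrix.smul_apply, twistMatrix, Matrix.diagonal_apply,
    Matrix.single_apply]
  by_cases hkl : k = l
  · subst hkl
    simp only [if_true, and_self, Algebra.smul_def, ← map_mul, ← map_sum,
      AddChar.sum_apply_neg_mul_mul_apply_mul hχ, ZMod.card, eq_comm]
    split_ifs <;> simp
  · have : ¬(j = k ∧ j = l) := fun h => hkl (h.1 ▸ h.2)
    simp [hkl, this]

end TwistMatrix

section SkewMatrix

variable {d : ℕ} [NeZero d] (χ : AddChar (ZMod d) ℂ)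

noncomputable def skewMatrix (a b : ℤ) (c : ZMod d) : Matrix (ZMod d) (ZMod d) R₂ :=
  C (T b : LaurentPolynomial ℂ) • (shiftMatrix d (a - b) * twistMatrix χ c)

theorem skewMatrix_zero : skewMatrix χ 0 0 0 = 1 := by
  rw [skewMatrix, sub_zero, shiftMatrix_zero, twistMatrix_zero, T_zero, map_one, one_smul, one_mul]

theorem skewMatrix_mul (a b : ℤ) (c : ZMod d) (e f : ℤ) (g : ZMod d) :
    skewMatrix χ a b c * skewMatrix χ e f g
      = χ (c * (e - f : ℤ)) • skewMatrix χ (a + e) (b + f) (c + g) := by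
  have commute : shiftMatrix d (a - b) * twistMatrix χ c * (shiftMatrix d (e - f) * twistMatrix χ g)
      = χ (c * (e - f : ℤ)) • (shiftMatrix d (a + e - (b + f)) * twistMatrix χ (c + g)) := by
    rw [Matrix.mul_assoc, ← Matrix.mul_assoc (twistMatrix χ c), twistMatrix_mul_shiftMatrix,
      Matrix.smul_mul, Matrix.mul_assoc, twistMatrix_mul, Matrix.mul_smul, ← Matrix.mul_assoc,
      shiftMatrix_mul]
    congr 3
    ring
  rw [skewMatrix, skewMatrix, skewMatrix, smul_mul_smul_comm, commute, smul_comm, T_add,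
    map_mul C]

theorem skewMatrix_eq_sum (a b : ℤ) (c : ZMod d) :
    skewMatrix χ a b c = ∑ r, χ (c * r) •
      Matrix.single (r + (a - b : ℤ)) r (laurentBasis₂ (b, ((r.val : ℤ) + (a - b)) / d)) := by
  refine Matrix.ext fun k l => ?_
  simp only [skewMatrix, shiftMatrix, twistMatrix, Matrix.smul_apply, Matrix.mul_diagonal,
    Matrix.of_apply, Matrix.sum_apply, Matrix.single_apply, ite_and, laurentBasis₂_apply]
  rw [Finset.sum_eq_single l (fun r _ hr => by simp [hr]) (by simp), if_pos rfl]
  by_cases h : k = l + ((a - b : ℤ) : ZMod d)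
  · rw [if_pos h, if_pos h.symm, Algebra.smul_def, smul_eq_mul]
    ring
  · rw [if_neg h, if_neg (Ne.symm h), zero_mul, smul_zero, smul_zero]

end SkewMatrix

namespace SkewLaurent2Algebra

variable {d : ℕ} [NeZero d] {ζ : ℂ} {A : Type} [Ring A] [Algebra ℂ A]
  (S : SkewLaurent2Algebra d ζ A) (χ : AddChar (ZMod d) ℂ)

noncomputable def toMatrix : A →ₗ[ℂ] Matrix (ZMod d) (ZMod d) R₂ :=
  S.basis.constr ℂ fun p => skewMatrix χ p.1 p.2.1 p.2.2

theorem toMatrix_b (a b : ℤ) (c : ZMod d) : S.toMatrix χ (S.b a b c) = skewMatrix χ a b c := by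
  rw [← S.basis_eq, toMatrix, Module.Basis.constr_basis]

theorem toMatrix_one : S.toMatrix χ 1 = 1 := by
  rw [← S.b_one, toMatrix_b, skewMatrix_zero]

theorem toMatrix_mul (hχ : χ 1 = ζ) (x y : A) :
    S.toMatrix χ (x * y) = S.toMatrix χ x * S.toMatrix χ y := by
  refine LinearMap.map_mul_of_map_mul_basis S.basis _ (fun ⟨a, b, c⟩ ⟨e, f, g⟩ => ?_) x y
  rw [S.basis_eq, S.basis_eq, S.b_mul, map_smul, toMatrix_b, toMatrix_b, toMatrix_b,
    skewMatrix_mul, AddChar.apply_mul_intCast, hχ]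

/-- Inverse to `toMatrix`: `E_ij s^m t^n = s^m X^{i-j+dn} E_jj`, and Fourier inversion gives
`E_jj = d⁻¹ ∑_c χ(-cj) D^c`. -/
noncomputable def ofMatrix : Matrix (ZMod d) (ZMod d) R₂ →ₗ[ℂ] A :=
  (laurentBasis₂.matrix (ZMod d) (ZMod d)).constr ℂ fun p =>
    (d : ℂ)⁻¹ • ∑ c, χ (-(c * p.2.1)) •
      S.b ((p.1.val : ℤ) - p.2.1.val + d * p.2.2.2 + p.2.2.1) p.2.2.1 c

theorem ofMatrix_single (i j : ZMod d) (m n : ℤ) :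
    S.ofMatrix χ (Matrix.single i j (laurentBasis₂ (m, n)))
      = (d : ℂ)⁻¹ • ∑ c, χ (-(c * j)) • S.b ((i.val : ℤ) - j.val + d * n + m) m c := by
  rw [← Module.Basis.matrix_apply, ofMatrix, Module.Basis.constr_basis]

theorem ofMatrix_skewMatrix (hχ : χ.IsPrimitive) (a b : ℤ) (c : ZMod d) :
    S.ofMatrix χ (skewMatrix χ a b c) = S.b a b c := by
  have hindex : ∀ r : ZMod d,
      ((r + (a - b : ℤ) : ZMod d).val : ℤ) - r.val + d * ((r.val + (a - b)) / d) + b = a := by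
    intro r
    have := Int.mul_ediv_add_emod ((r.val : ℤ) + (a - b)) d
    rw [ZMod.val_add_intCast]
    linarith
  have hfourier : ∀ g : ZMod d,
      ∑ r, χ (c * r) * ((d : ℂ)⁻¹ * χ (-(g * r))) = if c = g then 1 else 0 := by
    intro g
    have hd : (d : ℂ) ≠ 0 := Nat.cast_ne_zero.mpr (NeZero.ne d)
    calc ∑ r, χ (c * r) * ((d : ℂ)⁻¹ * χ (-(g * r)))
        = (d : ℂ)⁻¹ * ∑ r, χ (-(r * g)) * χ (r * c) := by
          rw [Finset.mul_sum]
          refine Finset.sum_congr rfl fun r _ => ?_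
          rw [mul_comm c, mul_comm g]
          ring
      _ = if c = g then 1 else 0 := by
          rw [AddChar.sum_apply_neg_mul_mul_apply_mul hχ, ZMod.card]
          split_ifs <;> simp [hd]
  rw [skewMatrix_eq_sum, map_sum]
  simp_rw [map_smul, ofMatrix_single, hindex, Finset.smul_sum, smul_smul]
  rw [Finset.sum_comm]
  simp_rw [← Finset.sum_smul, hfourier, ite_smul, one_smul, zero_smul, Finset.sum_ite_eq,
    Finset.mem_univ, if_true]

theorem toMatrix_ofMatrix_single (hχ : χ.IsPrimitive) (i j : ZMod d) (m n : ℤ) :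
    S.toMatrix χ (S.ofMatrix χ (Matrix.single i j (laurentBasis₂ (m, n))))
      = Matrix.single i j (laurentBasis₂ (m, n)) := by
  have hd : (d : ℂ) ≠ 0 := Nat.cast_ne_zero.mpr (NeZero.ne d)
  have hrow : j + (((i.val : ℤ) - j.val + d * n : ℤ) : ZMod d) = i := by
    push_cast
    simp
  have hcarry : ((j.val : ℤ) + ((i.val : ℤ) - j.val + d * n)) / d = n := by
    rw [show (j.val : ℤ) + ((i.val : ℤ) - j.val + d * n) = i.val + d * n by ring,
      Int.add_mul_ediv_left _ _ (by exact_mod_cast NeZero.ne d),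
      Int.ediv_eq_zero_of_lt (by positivity) (by exact_mod_cast ZMod.val_lt i), zero_add]
  rw [ofMatrix_single, map_smul, map_sum]
  simp_rw [map_smul, toMatrix_b, skewMatrix, add_sub_cancel_right]
  rw [Finset.sum_congr rfl fun c _ => smul_comm (χ (-(c * j))) (C (T m : LaurentPolynomial ℂ)) _]
  simp_rw [← Matrix.mul_smul]
  rw [← Finset.mul_sum, ← Finset.smul_sum, sum_twistMatrix χ hχ, smul_comm _ (d : ℂ),
    Matrix.mul_smul, smul_smul, inv_mul_cancel₀ hd, one_smul, Matrix.mul_smul,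
    shiftMatrix_mul_single, hrow, hcarry, Matrix.smul_single, laurentBasis₂_apply, smul_eq_mul]

noncomputable def algEquivMatrix (hχ₁ : χ 1 = ζ) (hχ : χ.IsPrimitive) :
    A ≃ₐ[ℂ] Matrix (ZMod d) (ZMod d) R₂ :=
  AlgEquiv.ofLinearEquiv
    (LinearEquiv.ofLinearMap (S.toMatrix χ) (S.ofMatrix χ)
      ((laurentBasis₂.matrix (ZMod d) (ZMod d)).ext fun ⟨i, j, m, n⟩ => by
        simpa using S.toMatrix_ofMatrix_single χ hχ i j m n)
      (S.basis.ext fun ⟨a, b, c⟩ => by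
        simpa [S.basis_eq, toMatrix_b] using S.ofMatrix_skewMatrix χ hχ a b c))
    (S.toMatrix_one χ) (S.toMatrix_mul χ hχ₁)

end SkewLaurent2Algebra

theorem stmt_10 (d : ℕ) (hd : 0 < d) (ζ : ℂ) (hζ : IsPrimitiveRoot ζ d)
    (A : Type) [Ring A] [Algebra ℂ A] (S : SkewLaurent2Algebra d ζ A) :
    Nonempty (A ≃ₐ[ℂ] Matrix (Fin d) (Fin d) (LaurentPolynomial (LaurentPolynomial ℂ))) := by
  have : NeZero d := ⟨hd.ne'⟩
  let χ := AddChar.zmodChar d hζ.pow_eq_one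
  have hχ₁ : χ 1 = ζ := by simpa using AddChar.zmodChar_apply' hζ.pow_eq_one 1
  exact ⟨(S.algEquivMatrix χ hχ₁ (AddChar.zmodChar_primitive_of_primitive_root d hζ)).trans
    (Matrix.reindexAlgEquiv ℂ R₂ (ZMod.finEquiv d).symm.toEquiv)⟩
end
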